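/- For every weight-reducing deterministic one-tape Turing machine M there is a constant C, depending only on M, such that every computation of M either is infinite and visits infinitely many tape cells, or is finite, visits at most C initially-blank cells, and has length at most a linear function of the input length. -/

import Mathlib

/-- A deterministic one-tape Turing machine over input alphabet `A`,
states `Q`, working alphabet `Γ`. -/
structure DTM (A Q Γ : Type*) where
  /-- embedding of input symbols into the working alphabet -/
  embed : A → Γ
  /-- the blank symbol -/
  blank : Γ
  /-- the initial state -/
  q0 : Q
  /-- the set of final states -/
  F : Set Q
  /-- the partial transition function; `true` means a right move -/
  δ : Q → Γ → Option (Q × Γ × Bool)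

/-- A configuration: current state, tape contents, head position. -/
structure TMCfg (Q Γ : Type*) where
  state : Q
  tape : ℤ → Γ
  head : ℤ

namespace DTM

variable {A Q Γ : Type*}

/-- One computation step (partial). -/
def stepCfg (M : DTM A Q Γ) (c : TMCfg Q Γ) : Option (TMCfg Q Γ) :=
  (M.δ c.state (c.tape c.head)).map (fun t =>
    ⟨t.1, Function.update c.tape c.head t.2.1,
      if t.2.2 then c.head + 1 else c.head - 1⟩)

/-- Initial tape contents on input `w`: the input occupies cells `0,…,|w|-1`,
all other cells are blank. -/
def initTape (M : DTM A Q Γ) (w : List A) : ℤ → Γ :=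
  fun i => if 0 ≤ i then (w.map M.embed).getD i.toNat M.blank else M.blank

/-- The initial configuration on input `w`. -/
def initCfg (M : DTM A Q Γ) (w : List A) : TMCfg Q Γ :=
  ⟨M.q0, M.initTape w, 0⟩

/-- The configuration reached after `n` steps on input `w` (`none` if the
machine halted earlier). -/
def run (M : DTM A Q Γ) (w : List A) : ℕ → Option (TMCfg Q Γ)
  | 0 => some (M.initCfg w)
  | n + 1 => (M.run w n).bind M.stepCfg

/-- `M` accepts `w` if its computation on `w` halts in a final state. -/
def Accepts (M : DTM A Q Γ) (w : List A) : Prop :=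
  ∃ n c, M.run w n = some c ∧ M.stepCfg c = none ∧ c.state ∈ M.F

/-- The language accepted by `M`. -/
def lang (M : DTM A Q Γ) : Language A := { w | M.Accepts w }

/-- `M` is weight-reducing: there is a strict partial order on `Γ` such that
every transition rewrites the scanned symbol with a strictly smaller one. -/
def WeightReducing (M : DTM A Q Γ) : Prop :=
  ∃ lt : Γ → Γ → Prop, IsStrictOrder Γ lt ∧
    ∀ p σ q τ d, M.δ p σ = some (q, τ, d) → lt τ σ

/-- The set of time instants at which the computation of `M` on `w` visits
(i.e. has its head scanning) the tape cell `i`. -/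
def visits (M : DTM A Q Γ) (w : List A) (i : ℤ) : Set ℕ :=
  { n | ∃ c, M.run w n = some c ∧ c.head = i }

/-- The computation of `M` on `w` is infinite. -/
def InfiniteOn (M : DTM A Q Γ) (w : List A) : Prop :=
  ∀ n, (M.run w n).isSome

end DTM


/-!
Weight reduction makes the symbols on a cell strictly decrease at each rewrite, so every cell is
scanned at most `|Γ|` times, and a computation scanning `k` cells takes fewer than `|Γ| k` steps.
This settles the infinite case and reduces the time bound to counting scanned blank cells.

Record for every cell `x` its visit trace, the states in which `x` is scanned, in order. Right of
the input, the head can enter the cells `≥ p` only through `p` and finds them blank, so the part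
of the computation there is determined by the visit trace of `p`. Hence two scanned blank cells
`p < p'` with equal traces would make the traces periodic with period `p' - p` from `p` on, and a
finite computation would have to scan cells arbitrarily far right. So the scanned blank cells on
each side (the left one by mirroring the machine) have distinct traces, of which there are at
most `(|Q| + 1) ^ |Γ|`.
-/

open Function

namespace TMCfg

variable {Q Γ : Type*}

def mirror (c : TMCfg Q Γ) : TMCfg Q Γ :=
  ⟨c.state, fun x => c.tape (-x), -c.head⟩

end TMCfg

namespace DTM

variable {A Q Γ : Type*}

section Step

variable (M : DTM A Q Γ)

def mirror : DTM A Q Γ :=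
  { M with δ := fun q σ => (M.δ q σ).map fun r => (r.1, r.2.1, !r.2.2) }

/-- Cells left of `p` are blanked out, so that the view depends only on the tape from `p` on. -/
def view (p : ℤ) (c : TMCfg Q Γ) : TMCfg Q Γ :=
  ⟨c.state, fun d => if 0 ≤ d then c.tape (p + d) else M.blank, c.head - p⟩

theorem stepCfg_eq_some_iff {c c' : TMCfg Q Γ} :
    M.stepCfg c = some c' ↔ ∃ q σ b, M.δ c.state (c.tape c.head) = some (q, σ, b) ∧
      c' = ⟨q, update c.tape c.head σ, if b then c.head + 1 else c.head - 1⟩ := by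
  simp only [stepCfg, Option.map_eq_some_iff, Prod.exists]
  exact exists₃_congr fun _ _ _ => and_congr_right' eq_comm

theorem stepCfg_mirror (c : TMCfg Q Γ) :
    M.mirror.stepCfg c.mirror = (M.stepCfg c).map TMCfg.mirror := by
  simp only [stepCfg, mirror, TMCfg.mirror, neg_neg, Option.map_map]
  congr 1
  funext ⟨q, σ, b⟩
  simp only [comp_apply, TMCfg.mirror, TMCfg.mk.injEq, true_and]
  refine ⟨?_, by cases b <;> simp <;> ring⟩
  funext x
  by_cases hx : x = -c.head
  · subst hx; simp
  · rw [update_of_ne hx, update_of_ne (by omega)]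

theorem stepCfg_view {p : ℤ} {c : TMCfg Q Γ} (hp : p ≤ c.head) :
    M.stepCfg (M.view p c) = (M.stepCfg c).map (M.view p) := by
  have hd : 0 ≤ c.head - p := by omega
  simp only [stepCfg, view, if_pos hd, add_sub_cancel, Option.map_map]
  congr 1
  funext ⟨q, σ, b⟩
  simp only [comp_apply, view, TMCfg.mk.injEq, true_and]
  refine ⟨?_, by cases b <;> simp <;> ring⟩
  funext d
  by_cases hdh : d = c.head - p
  · subst hdh; simp [hp]
  · rw [update_of_ne hdh]
    split_ifs
    · rw [update_of_ne (by omega)]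
    · rfl

theorem view_tape_eq_of_blank {L p p' : ℤ} {c : TMCfg Q Γ}
    (hblank : ∀ x ≥ L, c.tape x = M.blank) (hp : L ≤ p) (hp' : L ≤ p') :
    (M.view p c).tape = (M.view p' c).tape := by
  funext d
  simp only [view]
  split_ifs
  · rw [hblank _ (by omega), hblank _ (by omega)]
  · rfl

def DecreasesSymbols [LT Γ] : Prop :=
  ∀ p σ q τ d, M.δ p σ = some (q, τ, d) → τ < σ

variable {M} in
theorem DecreasesSymbols.mirror [LT Γ] (hwr : M.DecreasesSymbols) :
    M.mirror.DecreasesSymbols := by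
  intro p σ q τ d hδ
  obtain ⟨⟨q', τ', d'⟩, hδ', he⟩ := Option.map_eq_some_iff.mp hδ
  cases he
  exact hwr _ _ _ _ _ hδ'

end Step

section Runs

variable (M : DTM A Q Γ)

def IsRun (c : ℕ → TMCfg Q Γ) (t : ℕ) : Prop :=
  ∀ n < t, M.stepCfg (c n) = some (c (n + 1))

def visitedCells (c : ℕ → TMCfg Q Γ) (t : ℕ) : Finset ℤ :=
  (Finset.range (t + 1)).image fun m => (c m).head

variable {M} {c : ℕ → TMCfg Q Γ} {t n : ℕ}

theorem mem_visitedCells {x : ℤ} : x ∈ visitedCells c t ↔ ∃ m ≤ t, (c m).head = x := by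
  simp [visitedCells]

namespace IsRun

theorem head_succ (h : M.IsRun c t) (hn : n < t) :
    (c (n + 1)).head = (c n).head + 1 ∨ (c (n + 1)).head = (c n).head - 1 := by
  obtain ⟨q, σ, b, -, hc⟩ := M.stepCfg_eq_some_iff.mp (h n hn)
  rw [hc]
  cases b <;> simp

theorem tape_succ_of_ne (h : M.IsRun c t) (hn : n < t) {x : ℤ} (hx : x ≠ (c n).head) :
    (c (n + 1)).tape x = (c n).tape x := by
  obtain ⟨q, σ, b, -, hc⟩ := M.stepCfg_eq_some_iff.mp (h n hn)
  rw [hc]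
  exact update_of_ne hx _ _

theorem head_le (h : M.IsRun c t) : ∀ n ≤ t, (c n).head ≤ (c 0).head + n
  | 0, _ => by simp
  | n + 1, hn => by
    have := h.head_le n (by omega)
    rcases h.head_succ hn with h' | h' <;> push_cast <;> omega

theorem mirror (h : M.IsRun c t) : M.mirror.IsRun (fun n => (c n).mirror) t := fun n hn => by
  rw [stepCfg_mirror, h n hn, Option.map_some]

section WeightReducing

variable [PartialOrder Γ] (hwr : M.DecreasesSymbols)
include hwr

theorem tape_succ_le (h : M.IsRun c t) (hn : n < t) (x : ℤ) :
    (c (n + 1)).tape x ≤ (c n).tape x := by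
  obtain ⟨q, σ, b, hδ, hc⟩ := M.stepCfg_eq_some_iff.mp (h n hn)
  rw [hc]
  by_cases hx : x = (c n).head
  · subst hx
    simpa using (hwr _ _ _ _ _ hδ).le
  · exact (update_of_ne hx _ _).le

theorem tape_lt_of_lt (h : M.IsRun c t) {m m' : ℕ} (hm : m < m') (hm' : m' ≤ t) :
    (c m').tape (c m).head < (c m).tape (c m).head := by
  induction m', hm using Nat.le_induction with
  | base =>
    obtain ⟨q, σ, b, hδ, hc⟩ := M.stepCfg_eq_some_iff.mp (h m (by omega))
    rw [hc]
    simpa using hwr _ _ _ _ _ hδ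
  | succ k _ ih => exact (h.tape_succ_le hwr (by omega) _).trans_lt (ih (by omega))

theorem count_visits_le [Fintype Γ] (h : M.IsRun c t) (x : ℤ) :
    Nat.count (fun m => (c m).head = x) (t + 1) ≤ Fintype.card Γ := by
  rw [Nat.count_eq_card_filter_range, ← Finset.card_univ]
  refine Finset.card_le_card_of_injOn (fun m => (c m).tape x) (fun _ _ => Finset.mem_univ _) ?_
  intro m hm m' hm' heq
  simp only [Finset.coe_filter, Finset.mem_range, Set.mem_ofPred_eq] at hm hm'
  by_contra hne
  rcases lt_or_gt_of_ne hne with hlt | hlt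
  · have := h.tape_lt_of_lt hwr hlt (by omega)
    rw [hm.2] at this
    exact this.ne heq.symm
  · have := h.tape_lt_of_lt hwr hlt (by omega)
    rw [hm'.2] at this
    exact this.ne heq

theorem succ_le_mul_card_visitedCells [Fintype Γ] (h : M.IsRun c t) :
    t + 1 ≤ Fintype.card Γ * (visitedCells c t).card := by
  simpa [visitedCells, Nat.count_eq_card_filter_range] using
    Finset.card_le_mul_card_image (Finset.range (t + 1)) _
      fun x _ => (Nat.count_eq_card_filter_range _ _).symm.trans_le (h.count_visits_le hwr x)

end WeightReducing

end IsRun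

end Runs

section VisitTrace

noncomputable def visitTrace (c : ℕ → TMCfg Q Γ) (t : ℕ) (x : ℤ) (j : ℕ) : Option Q :=
  if j < Nat.count (fun m => (c m).head = x) (t + 1) then
    some (c (Nat.nth (fun m => (c m).head = x) j)).state
  else none

variable {c : ℕ → TMCfg Q Γ} {t : ℕ} {x : ℤ}

theorem visitTrace_eq_some_iff {j : ℕ} {q : Q} :
    visitTrace c t x j = some q ↔
      ∃ m ≤ t, (c m).head = x ∧ Nat.count (fun m => (c m).head = x) m = j ∧
        (c m).state = q := by
  constructor
  · intro h
    unfold visitTrace at h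
    split_ifs at h with hj
    have hnth : ∀ hf : (Set.ofPred fun m => (c m).head = x).Finite, j < hf.toFinset.card :=
      fun hf => hj.trans_le (Nat.count_le_card hf _)
    exact ⟨_, Nat.lt_succ_iff.mp (Nat.nth_lt_of_lt_count hj), Nat.nth_mem j hnth,
      Nat.count_nth hnth, Option.some_inj.mp h⟩
  · rintro ⟨m, hm, hx, rfl, rfl⟩
    rw [visitTrace, if_pos (Nat.count_strict_mono hx (Nat.lt_succ_of_le hm)), Nat.nth_count hx]

theorem visitTrace_count_succ :
    visitTrace c t x (Nat.count (fun m => (c m).head = x) (t + 1)) = none :=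
  if_neg (lt_irrefl _)

theorem visitTrace_eq_none_of_le [Fintype Γ] [PartialOrder Γ] {M : DTM A Q Γ}
    (hwr : M.DecreasesSymbols) (h : M.IsRun c t) {j : ℕ}
    (hj : Fintype.card Γ ≤ j) : visitTrace c t x j = none :=
  if_neg (not_lt.mpr ((h.count_visits_le hwr x).trans hj))

end VisitTrace

section Region

variable (M : DTM A Q Γ)

/-- A step of the computation confined to the cells `d ≥ 0`, with the visits to each cell
counted in the second component. When the head leaves the region, it is put back on cell `0` in
the state that the visit trace `τ` of that cell prescribes for its next visit. -/
def regionStep (τ : ℕ → Option Q) (s : TMCfg Q Γ × (ℕ → ℕ)) :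
    Option (TMCfg Q Γ × (ℕ → ℕ)) :=
  let ν := update s.2 s.1.head.toNat (s.2 s.1.head.toNat + 1)
  (M.stepCfg s.1).bind fun c =>
    if 0 ≤ c.head then some (c, ν) else (τ (ν 0)).map fun q => (⟨q, c.tape, 0⟩, ν)

def regionRun (τ : ℕ → Option Q) (T : ℤ → Γ) :
    ℕ → Option (TMCfg Q Γ × (ℕ → ℕ))
  | 0 => (τ 0).map fun q => (⟨q, T, 0⟩, fun _ => 0)
  | k + 1 => (regionRun τ T k).bind (M.regionStep τ)

/-- While the head is left of `p`, this is the configuration in which it will next enter the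
cells `≥ p` (or `none` if it never does). -/
noncomputable def regionSnapshot (c : ℕ → TMCfg Q Γ) (t : ℕ) (p : ℤ) (n : ℕ) :
    Option (TMCfg Q Γ × (ℕ → ℕ)) :=
  let ν := fun d : ℕ => Nat.count (fun m => (c m).head = p + d) n
  if p ≤ (c n).head then some (M.view p (c n), ν)
  else (visitTrace c t p (ν 0)).map fun q => (⟨q, (M.view p (c n)).tape, 0⟩, ν)

variable {M} {c : ℕ → TMCfg Q Γ} {t n : ℕ} {p : ℤ}

namespace IsRun

theorem regionSnapshot_succ_of_le (h : M.IsRun c t) (hn : n < t) (hp : p ≤ (c n).head) :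
    M.regionSnapshot c t p (n + 1) =
      (M.regionSnapshot c t p n).bind (M.regionStep (visitTrace c t p)) := by
  have hν : update (fun d : ℕ => Nat.count (fun m => (c m).head = p + d) n)
      ((M.view p (c n)).head.toNat)
      (Nat.count (fun m => (c m).head = p + ((M.view p (c n)).head.toNat : ℕ)) n + 1) =
      fun d : ℕ => Nat.count (fun m => (c m).head = p + d) (n + 1) := by
    funext d
    rw [Nat.count_succ]
    by_cases hd : d = ((c n).head - p).toNat
    · subst hd; simp [view, hp]
    · rw [update_of_ne (show d ≠ (M.view p (c n)).head.toNat from hd), if_neg (by omega),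
        add_zero]
  simp only [regionSnapshot, if_pos hp, Option.bind_some, regionStep, M.stepCfg_view hp, h n hn,
    Option.map_some, hν]
  simp only [view, sub_nonneg, Nat.cast_zero, add_zero]

theorem regionSnapshot_succ_of_lt (h : M.IsRun c t) (hn : n < t) (hp : (c n).head < p) :
    M.regionSnapshot c t p (n + 1) = M.regionSnapshot c t p n := by
  have hν (x : ℤ) (hx : p ≤ x) : Nat.count (fun m => (c m).head = x) (n + 1) =
      Nat.count (fun m => (c m).head = x) n :=
    Nat.count_succ_eq_count_iff.mpr (by omega)
  have htape : (M.view p (c (n + 1))).tape = (M.view p (c n)).tape := by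
    funext d
    simp only [view]
    split_ifs
    · exact h.tape_succ_of_ne hn (by omega)
    · rfl
  simp only [regionSnapshot, Nat.cast_zero, add_zero, hν p le_rfl,
    hν (p + _) (le_add_of_nonneg_right (Nat.cast_nonneg _)), htape, if_neg (not_le.mpr hp)]
  split_ifs with hp'
  · have hhead : (c (n + 1)).head = p := by rcases h.head_succ hn with h' | h' <;> omega
    have hvisit := visitTrace_eq_some_iff.mpr ⟨n + 1, hn, hhead, rfl, rfl⟩
    rw [hν p le_rfl] at hvisit
    rw [hvisit, Option.map_some, ← htape]
    simp [view, hhead]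
  · rfl

theorem regionRun_count (h : M.IsRun c t) (hp : (c 0).head < p) :
    ∀ n ≤ t, M.regionRun (visitTrace c t p) (M.view p (c 0)).tape
      (Nat.count (fun m => p ≤ (c m).head) n) = M.regionSnapshot c t p n
  | 0, _ => by simp [regionRun, regionSnapshot, not_le.mpr hp]
  | n + 1, hn => by
    rw [Nat.count_succ]
    by_cases hpn : p ≤ (c n).head
    · rw [if_pos hpn, h.regionSnapshot_succ_of_le hn hpn, ← h.regionRun_count hp n (by omega)]
      rfl
    · rw [if_neg hpn, add_zero, h.regionSnapshot_succ_of_lt hn (not_le.mp hpn),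
        h.regionRun_count hp n (by omega)]

theorem regionRun_eq_none (h : M.IsRun c t) (hhalt : M.stepCfg (c t) = none)
    (hp : (c 0).head < p) {k : ℕ} (hk : Nat.count (fun m => p ≤ (c m).head) (t + 1) ≤ k) :
    M.regionRun (visitTrace c t p) (M.view p (c 0)).tape k = none := by
  induction k, hk using Nat.le_induction with
  | base =>
    rw [Nat.count_succ]
    by_cases hpt : p ≤ (c t).head
    · rw [if_pos hpt, regionRun, h.regionRun_count hp t le_rfl, regionSnapshot, if_pos hpt]
      simp [regionStep, M.stepCfg_view hpt, hhalt]
    · rw [if_neg hpt, add_zero, h.regionRun_count hp t le_rfl, regionSnapshot, if_neg hpt]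
      have hlast : Nat.count (fun m => (c m).head = p) t =
          Nat.count (fun m => (c m).head = p) (t + 1) :=
        (Nat.count_succ_eq_count_iff.mpr (by omega)).symm
      simp only [Nat.cast_zero, add_zero, hlast, visitTrace_count_succ, Option.map_none]
  | succ k _ ih => rw [regionRun, ih, Option.bind_none]

section Halting

variable (h : M.IsRun c t) (hhalt : M.stepCfg (c t) = none)
include h hhalt

theorem visitTrace_add_eq_some_iff (hp : (c 0).head < p) (d j : ℕ) (q : Q) :
    visitTrace c t (p + d) j = some q ↔
      ∃ k s, M.regionRun (visitTrace c t p) (M.view p (c 0)).tape k = some s ∧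
        s.1.head = d ∧ s.2 d = j ∧ s.1.state = q := by
  rw [visitTrace_eq_some_iff]
  constructor
  · rintro ⟨m, hm, hhead, rfl, rfl⟩
    have hR : p ≤ (c m).head := by rw [hhead]; omega
    refine ⟨_, _, (h.regionRun_count hp m hm).trans (by rw [regionSnapshot, if_pos hR]), ?_⟩
    simp [view, hhead]
  · rintro ⟨k, s, hs, hhead, rfl, rfl⟩
    set R := fun m => p ≤ (c m).head
    have hk : k < Nat.count R (t + 1) := by
      by_contra hk
      rw [h.regionRun_eq_none hhalt hp (not_lt.mp hk)] at hs
      simp at hs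
    have hnth : ∀ hf : (Set.ofPred R).Finite, k < hf.toFinset.card :=
      fun hf => hk.trans_le (Nat.count_le_card hf _)
    have hR : R (Nat.nth R k) := Nat.nth_mem k hnth
    rw [← Nat.count_nth hnth, h.regionRun_count hp _ (Nat.lt_succ_iff.mp
      (Nat.nth_lt_of_lt_count hk)), regionSnapshot, if_pos hR, Option.some_inj] at hs
    subst hs
    exact ⟨Nat.nth R k, Nat.lt_succ_iff.mp (Nat.nth_lt_of_lt_count hk),
      by simp only [view] at hhead; omega, rfl, rfl⟩

theorem visitTrace_add_eq {p' : ℤ} (hp : (c 0).head < p) (hp' : (c 0).head < p')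
    (htape : (M.view p (c 0)).tape = (M.view p' (c 0)).tape)
    (htrace : visitTrace c t p = visitTrace c t p') (d : ℕ) :
    visitTrace c t (p + d) = visitTrace c t (p' + d) := by
  funext j
  refine Option.ext fun q => ?_
  rw [h.visitTrace_add_eq_some_iff hhalt hp, h.visitTrace_add_eq_some_iff hhalt hp', htape,
    htrace]

theorem visitTrace_add_mul_eq {L x : ℤ} {s : ℕ} (hL : (c 0).head < L)
    (hblank : ∀ x ≥ L, (c 0).tape x = M.blank) (hx : L ≤ x)
    (htrace : visitTrace c t (x + s) = visitTrace c t x) (k : ℕ) :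
    visitTrace c t (x + ↑(k * s)) = visitTrace c t x := by
  induction k with
  | zero => simp
  | succ k ih =>
    have hshift := h.visitTrace_add_eq hhalt (by omega) (by omega)
      (M.view_tape_eq_of_blank hblank (by omega) hx) htrace (k * s)
    rw [← ih, ← hshift, add_assoc]
    push_cast
    ring_nf

theorem visitTrace_ne_add {L x : ℤ} {s : ℕ} (hL : (c 0).head < L)
    (hblank : ∀ x ≥ L, (c 0).tape x = M.blank) (hx : L ≤ x)
    (hvisit : ∃ m ≤ t, (c m).head = x) (hs : 0 < s) :
    visitTrace c t x ≠ visitTrace c t (x + s) := by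
  intro htrace
  obtain ⟨m, hm, hmx⟩ := hvisit
  have hfar : visitTrace c t x (Nat.count (fun n => (c n).head = x) m) = some (c m).state :=
    visitTrace_eq_some_iff.mpr ⟨m, hm, hmx, rfl, rfl⟩
  rw [← h.visitTrace_add_mul_eq hhalt hL hblank hx htrace.symm (t + 1),
    visitTrace_eq_some_iff] at hfar
  obtain ⟨m', hm', hhead, -⟩ := hfar
  have := h.head_le m' hm'
  push_cast at hhead
  nlinarith

theorem injOn_visitTrace {L : ℤ} (hL : (c 0).head < L)
    (hblank : ∀ x ≥ L, (c 0).tape x = M.blank) :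
    Set.InjOn (visitTrace c t) {x | L ≤ x ∧ ∃ m ≤ t, (c m).head = x} := by
  rintro x ⟨hx, hvx⟩ y ⟨hy, hvy⟩ hxy
  by_contra hne
  rcases lt_or_gt_of_ne hne with hlt | hlt
  · obtain ⟨s, rfl⟩ := Int.le.dest hlt.le
    exact h.visitTrace_ne_add hhalt hL hblank hx hvx (by omega) hxy
  · obtain ⟨s, rfl⟩ := Int.le.dest hlt.le
    exact h.visitTrace_ne_add hhalt hL hblank hy hvy (by omega) hxy.symm

theorem card_visitedCells_right_le [Fintype Q] [Fintype Γ] [PartialOrder Γ]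
    (hwr : M.DecreasesSymbols) {L : ℤ} (hL : (c 0).head < L)
    (hblank : ∀ x ≥ L, (c 0).tape x = M.blank) :
    ((visitedCells c t).filter (L ≤ ·)).card ≤
      Fintype.card (Fin (Fintype.card Γ) → Option Q) := by
  rw [← Finset.card_univ]
  refine Finset.card_le_card_of_injOn (fun x (j : Fin _) => visitTrace c t x j)
    (fun _ _ => Finset.mem_univ _) fun x hx y hy hxy => ?_
  simp only [Finset.coe_filter, mem_visitedCells, Set.mem_ofPred_eq] at hx hy
  refine h.injOn_visitTrace hhalt hL hblank ⟨hx.2, hx.1⟩ ⟨hy.2, hy.1⟩ (funext fun j => ?_)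
  by_cases hj : j < Fintype.card Γ
  · exact congrFun hxy ⟨j, hj⟩
  · rw [visitTrace_eq_none_of_le hwr h (not_lt.mp hj),
      visitTrace_eq_none_of_le hwr h (not_lt.mp hj)]

theorem card_visitedCells_left_le [Fintype Q] [Fintype Γ] [PartialOrder Γ]
    (hwr : M.DecreasesSymbols) {L : ℤ} (hL : L < (c 0).head)
    (hblank : ∀ x ≤ L, (c 0).tape x = M.blank) :
    ((visitedCells c t).filter (· ≤ L)).card ≤
      Fintype.card (Fin (Fintype.card Γ) → Option Q) := by
  have hmirror := h.mirror.card_visitedCells_right_le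
    (by rw [stepCfg_mirror, hhalt, Option.map_none]) hwr.mirror (L := -L)
    (by simpa [TMCfg.mirror] using hL)
    (fun x hx => hblank (-x) (by omega))
  have himage : visitedCells (fun n => (c n).mirror) t = (visitedCells c t).image (- ·) := by
    simp [visitedCells, Finset.image_image, comp_def, TMCfg.mirror]
  rw [himage, Finset.filter_image, Finset.card_image_of_injective _ neg_injective] at hmirror
  simpa only [neg_le_neg_iff] using hmirror

end Halting

end IsRun

end Region

section Run

variable (M : DTM A Q Γ) (w : List A)

def cfg (n : ℕ) : TMCfg Q Γ := (M.run w n).getD (M.initCfg w)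

variable {M w} {t : ℕ}

theorem run_isSome_of_le {m n : ℕ} (hmn : m ≤ n) (h : (M.run w n).isSome) :
    (M.run w m).isSome := by
  induction n, hmn using Nat.le_induction with
  | base => exact h
  | succ n _ ih =>
    apply ih
    cases hr : M.run w n <;> simp_all [run]

theorem run_eq_some_cfg {n : ℕ} (h : (M.run w n).isSome) : M.run w n = some (M.cfg w n) := by
  rw [cfg, Option.getD_of_ne_none (Option.isSome_iff_ne_none.mp h)]

theorem isRun_cfg (ht : (M.run w t).isSome) : M.IsRun (M.cfg w) t := fun n hn => by
  have h := run_eq_some_cfg (run_isSome_of_le hn ht)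
  rwa [run, run_eq_some_cfg (run_isSome_of_le hn.le ht), Option.bind_some] at h

theorem stepCfg_cfg_eq_none (ht : (M.run w t).isSome) (hlast : M.run w (t + 1) = none) :
    M.stepCfg (M.cfg w t) = none := by
  rwa [run, run_eq_some_cfg ht, Option.bind_some] at hlast

theorem exists_run_isSome_and_succ_eq_none (h : ¬M.InfiniteOn w) :
    ∃ t, (M.run w t).isSome ∧ M.run w (t + 1) = none := by
  have hex : ∃ t, M.run w (t + 1) = none := by
    obtain ⟨n, hn⟩ := not_forall.mp h
    obtain _ | t := n
    · simp [run] at hn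
    · exact ⟨t, by simpa using hn⟩
  refine ⟨Nat.find hex, ?_, Nat.find_spec hex⟩
  rcases hn : Nat.find hex with _ | t
  · simp [run]
  · exact Option.isSome_iff_ne_none.mpr (Nat.find_min hex (by omega))

theorem visits_nonempty_iff (ht : (M.run w t).isSome) (hlast : M.run w (t + 1) = none)
    {i : ℤ} : (M.visits w i).Nonempty ↔ i ∈ visitedCells (M.cfg w) t := by
  rw [mem_visitedCells]
  constructor
  · rintro ⟨m, d, hd, rfl⟩
    have hm : m ≤ t := by
      by_contra hm
      simpa [hlast] using run_isSome_of_le (w := w) (M := M) (not_le.mp hm) (by rw [hd]; rfl)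
    exact ⟨m, hm, by rw [run_eq_some_cfg (run_isSome_of_le hm ht)] at hd; cases hd; rfl⟩
  · rintro ⟨m, hm, rfl⟩
    exact ⟨m, _, run_eq_some_cfg (run_isSome_of_le hm ht), rfl⟩

end Run

section Bounds

variable {M : DTM A Q Γ} [Fintype Γ] [PartialOrder Γ]
  (hwr : M.DecreasesSymbols)
include hwr

theorem infinite_visits_of_infiniteOn {w : List A} (h : M.InfiniteOn w) :
    {i : ℤ | (M.visits w i).Nonempty}.Infinite := by
  intro hfin
  set t := Fintype.card Γ * hfin.toFinset.card
  have hsub : visitedCells (M.cfg w) t ⊆ hfin.toFinset := fun i hi => by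
    obtain ⟨m, -, rfl⟩ := mem_visitedCells.mp hi
    exact hfin.mem_toFinset.mpr ⟨m, _, run_eq_some_cfg (h m), rfl⟩
  have := (isRun_cfg (h t)).succ_le_mul_card_visitedCells hwr
  have := Nat.mul_le_mul_left (Fintype.card Γ) (Finset.card_le_card hsub)
  omega

variable [Fintype Q] {w : List A} {t : ℕ} (ht : (M.run w t).isSome)
  (hlast : M.run w (t + 1) = none)
include ht hlast

theorem card_blank_visitedCells_le :
    ((visitedCells (M.cfg w) t).filter fun i => i < 0 ∨ (w.length : ℤ) ≤ i).card ≤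
      2 * Fintype.card (Fin (Fintype.card Γ) → Option Q) + 1 := by
  have h := isRun_cfg ht
  have hhalt := stepCfg_cfg_eq_none ht hlast
  have hhead : (M.cfg w 0).head = 0 := rfl
  set V := visitedCells (M.cfg w) t
  have hleft := h.card_visitedCells_left_le hhalt hwr (L := -1) (by omega)
    fun x hx => if_neg (by omega)
  have hright := h.card_visitedCells_right_le hhalt hwr (L := max (w.length : ℤ) 1) (by omega)
    fun x hx => by
      change (if 0 ≤ x then _ else _) = _
      rw [if_pos (by omega)]
      exact List.getD_eq_default _ _ (by simp; omega)
  calc _ ≤ (V.filter (· ≤ -1) ∪ V.filter (max (w.length : ℤ) 1 ≤ ·) ∪ {0}).card := by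
        refine Finset.card_le_card fun i => ?_
        simp only [Finset.mem_filter, Finset.mem_union, Finset.mem_singleton]
        rintro ⟨hV, hi⟩
        rcases lt_trichotomy i 0 with hi' | hi' | hi'
        · exact .inl (.inl ⟨hV, by omega⟩)
        · exact .inr hi'
        · exact .inl (.inr ⟨hV, by omega⟩)
    _ ≤ _ := by
        grind [Finset.card_union_le, Finset.card_singleton]

theorem halt_time_le :
    t ≤ Fintype.card Γ * w.length +
      Fintype.card Γ * (2 * Fintype.card (Fin (Fintype.card Γ) → Option Q) + 1) := by
  have hblank := card_blank_visitedCells_le hwr ht hlast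
  set V := visitedCells (M.cfg w) t
  have hinput : (V.filter fun i => ¬(i < 0 ∨ (w.length : ℤ) ≤ i)).card ≤ w.length := by
    refine (Finset.card_le_card fun i hi => ?_).trans (Int.card_Ico 0 w.length).le
    simp only [Finset.mem_filter, Finset.mem_Ico] at hi ⊢
    omega
  have hcard :=
    Finset.card_filter_add_card_filter_not (s := V) fun i => i < 0 ∨ (w.length : ℤ) ≤ i
  calc t ≤ Fintype.card Γ * V.card :=
        Nat.le_of_succ_le ((isRun_cfg ht).succ_le_mul_card_visitedCells hwr)
    _ ≤ _ := by
      rw [← mul_add]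
      gcongr
      omega

theorem ncard_blank_visits_le :
    {i : ℤ | (i < 0 ∨ (w.length : ℤ) ≤ i) ∧ (M.visits w i).Nonempty}.ncard ≤
      2 * Fintype.card (Fin (Fintype.card Γ) → Option Q) + 1 := by
  have hset : {i : ℤ | (i < 0 ∨ (w.length : ℤ) ≤ i) ∧ (M.visits w i).Nonempty} =
      ↑((visitedCells (M.cfg w) t).filter fun i => i < 0 ∨ (w.length : ℤ) ≤ i) := by
    ext i
    simp [visits_nonempty_iff ht hlast, and_comm]
  rw [hset, Set.ncard_coe_finset]
  exact card_blank_visitedCells_le hwr ht hlast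

end Bounds

end DTM

/-- Dichotomy of computations of a weight-reducing DTM `M`: there are
constants `C`, `K`, `D` (depending only on `M`) such that each computation
either is infinite and visits infinitely many tape cells, or is finite, has
length linearly bounded in the input length, and visits at most `C`
initially-blank cells. -/
theorem stmt16 {A Q Γ : Type*} [Fintype Q] [Fintype Γ] (M : DTM A Q Γ)
    (hwr : M.WeightReducing) :
    ∃ C K D : ℕ, ∀ w : List A,
      (M.InfiniteOn w ∧ {i : ℤ | (M.visits w i).Nonempty}.Infinite) ∨
      (∃ t : ℕ, (M.run w t).isSome ∧ M.run w (t + 1) = none ∧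
        t ≤ K * w.length + D ∧
        {i : ℤ | (i < 0 ∨ (w.length : ℤ) ≤ i) ∧
          (M.visits w i).Nonempty}.ncard ≤ C) := by
  obtain ⟨lt, hlt, hwr⟩ := hwr
  let _ : PartialOrder Γ := partialOrderOfSO lt
  set N := Fintype.card (Fin (Fintype.card Γ) → Option Q)
  refine ⟨2 * N + 1, Fintype.card Γ, Fintype.card Γ * (2 * N + 1), fun w => ?_⟩
  by_cases hinf : M.InfiniteOn w
  · exact .inl ⟨hinf, DTM.infinite_visits_of_infiniteOn hwr hinf⟩
  · obtain ⟨t, ht, hlast⟩ := DTM.exists_run_isSome_and_succ_eq_none hinf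
    exact .inr ⟨t, ht, hlast, DTM.halt_time_le hwr ht hlast,
      DTM.ncard_blank_visits_le hwr ht hlast⟩
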